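/- arXiv:1010.2247 — 2 statements merged into one kernel-verified Lean document; each statement's English description precedes it below -/
import Mathlib

section
/- Let f : ℝⁿ → ℝⁿ, let x* : ℝ → ℝⁿ be differentiable with (x*)'(τ) = f(x*(τ)) for all τ, and let z : ℝ → ℝⁿ be differentiable. Let x : ℝ → ℝⁿ be differentiable with x'(t) = f(x(t)) for all t, and let τ : ℝ → ℝ be differentiable such that the transversality constraint ⟨z(τ(t)), x(t) − x*(τ(t))⟩ = 0 holds for all t (inner product in ℝⁿ). Fix a time t and suppose the denominator D = ⟨z(τ(t)), f(x*(τ(t)))⟩ − ⟨z'(τ(t)), x(t) − x*(τ(t))⟩ is nonzero. Then τ'(t) = ⟨z(τ(t)), f(x(t))⟩ / D. -/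
open RealInnerProductSpace Filter Topology

section Retiming

variable {E : Type*} [NormedAddCommGroup E] [InnerProductSpace ℝ E]
  {u v w : ℝ → E} {τ : ℝ → ℝ} {u' v' w' : E} {τ' t : ℝ}

theorem hasDerivAt_inner_comp_sub_comp (hu : HasDerivAt u u' (τ t)) (hv : HasDerivAt v v' t)
    (hw : HasDerivAt w w' (τ t)) (hτ : HasDerivAt τ τ' t) :
    HasDerivAt (fun s => ⟪u (τ s), v s - w (τ s)⟫)
      (τ' * ⟪u', v t - w (τ t)⟫ + ⟪u (τ t), v'⟫ - τ' * ⟪u (τ t), w'⟫) t := by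
  refine ((hu.scomp t hτ).inner ℝ (hv.sub (hw.scomp t hτ))).congr_deriv ?_
  simp only [Function.comp_apply, Pi.sub_apply, inner_sub_right, real_inner_smul_left,
    real_inner_smul_right]
  ring

theorem mul_eq_inner_of_inner_comp_sub_comp_eq_zero (hu : HasDerivAt u u' (τ t))
    (hv : HasDerivAt v v' t) (hw : HasDerivAt w w' (τ t)) (hτ : HasDerivAt τ τ' t)
    (hzero : ∀ᶠ s in 𝓝 t, ⟪u (τ s), v s - w (τ s)⟫ = 0) :
    τ' * (⟪u (τ t), w'⟫ - ⟪u', v t - w (τ t)⟫) = ⟪u (τ t), v'⟫ := by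
  have hconst : HasDerivAt (fun s => ⟪u (τ s), v s - w (τ s)⟫) 0 t :=
    (hasDerivAt_const t (0 : ℝ)).congr_of_eventuallyEq hzero
  have h := (hasDerivAt_inner_comp_sub_comp hu hv hw hτ).unique hconst
  linarith

end Retiming

/-- The retiming dynamics of the transverse coordinates: if the phase variable
`τ(t)` satisfies the transversality constraint `⟪z(τ(t)), x(t) − x*(τ(t))⟫ = 0`
along a trajectory `x` of `ẋ = f(x)`, then wherever the denominator
`D = ⟪z(τ), f(x*(τ))⟫ − ⟪z'(τ), x − x*(τ)⟫` is nonzero,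
`τ̇ = ⟪z(τ), f(x)⟫ / D`. -/
theorem retiming_dynamics
    {n : ℕ} (f : EuclideanSpace ℝ (Fin n) → EuclideanSpace ℝ (Fin n))
    (xstar : ℝ → EuclideanSpace ℝ (Fin n))
    (hxstar : ∀ s : ℝ, HasDerivAt xstar (f (xstar s)) s)
    (z : ℝ → EuclideanSpace ℝ (Fin n)) (hz : Differentiable ℝ z)
    (x : ℝ → EuclideanSpace ℝ (Fin n))
    (hx : ∀ t : ℝ, HasDerivAt x (f (x t)) t)
    (τ : ℝ → ℝ) (hτ : Differentiable ℝ τ)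
    (hconstraint : ∀ t : ℝ, ⟪z (τ t), x t - xstar (τ t)⟫ = 0)
    (t : ℝ)
    (hD : ⟪z (τ t), f (xstar (τ t))⟫ - ⟪deriv z (τ t), x t - xstar (τ t)⟫ ≠ 0) :
    deriv τ t = ⟪z (τ t), f (x t)⟫ /
      (⟪z (τ t), f (xstar (τ t))⟫ - ⟪deriv z (τ t), x t - xstar (τ t)⟫) :=
  eq_div_of_mul_eq hD <|
    mul_eq_inner_of_inner_comp_sub_comp_eq_zero (hz (τ t)).hasDerivAt (hx t) (hxstar (τ t))
      (hτ t).hasDerivAt (Eventually.of_forall hconstraint)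
end

section
/- Let f : ℝⁿ → ℝⁿ, let x* : ℝ → ℝⁿ be differentiable with (x*)'(τ) = f(x*(τ)) for all τ, and let Π : ℝ → ℝ^{(n−1)×n} be a differentiable matrix-valued function. Let x : ℝ → ℝⁿ be differentiable with x'(t) = f(x(t)) for all t, and let τ : ℝ → ℝ be differentiable. Define x⊥(t) = Π(τ(t))(x(t) − x*(τ(t))), and assume that for all t the reconstruction identity x(t) − x*(τ(t)) = Π(τ(t))ᵀ x⊥(t) holds. Then x⊥ is differentiable and for all t: x⊥'(t) = τ'(t)·Π'(τ(t))·Π(τ(t))ᵀ·x⊥(t) + Π(τ(t))·f(x*(τ(t)) + Π(τ(t))ᵀ x⊥(t)) − Π(τ(t))·f(x*(τ(t)))·τ'(t). -/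
/-!
Differentiate `x⊥ = Π(τ)(x − x*(τ))` by the product and chain rules, then use the reconstruction
identity twice: `Π'(τ)(x − x*(τ)) = Π'(τ)Π(τ)ᵀx⊥` and `x = x*(τ) + Π(τ)ᵀx⊥`.
-/

open Matrix

/-- Matrices carry no canonical norm, so the derivative of `A` is taken entrywise. -/
theorem HasDerivAt.matrix_mulVec {𝕜 : Type*} [NontriviallyNormedField 𝕜] {m k : Type*}
    [Fintype m] [Fintype k] {A : 𝕜 → Matrix m k 𝕜} {A' : Matrix m k 𝕜} {v : 𝕜 → k → 𝕜}
    {v' : k → 𝕜} {t : 𝕜} (hA : ∀ i j, HasDerivAt (fun s => A s i j) (A' i j) t)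
    (hv : HasDerivAt v v' t) :
    HasDerivAt (fun s => (A s).mulVec (v s)) (A'.mulVec (v t) + (A t).mulVec v') t := by
  refine hasDerivAt_pi.mpr fun i => ?_
  have hentry : ∀ j, HasDerivAt (fun s => A s i j * v s j)
      (A' i j * v t j + A t i j * v' j) t :=
    fun j => (hA i j).mul (hasDerivAt_pi.mp hv j)
  simpa only [mulVec, dotProduct, Pi.add_apply, Finset.sum_add_distrib] using
    HasDerivAt.fun_sum fun j (_ : j ∈ Finset.univ) => hentry j

/-- The continuous transverse dynamics: with projections `Π(τ) ∈ ℝ^{(n−1)×n}`,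
transversal coordinate `x⊥(t) = Π(τ(t))(x(t) − x*(τ(t)))`, and reconstruction
identity `x(t) − x*(τ(t)) = Π(τ(t))ᵀ x⊥(t)`, one has
`ẋ⊥ = τ̇ Π'(τ)Π(τ)ᵀ x⊥ + Π(τ) f(x*(τ) + Π(τ)ᵀ x⊥) − Π(τ) f(x*(τ)) τ̇`. -/
theorem transverse_dynamics
    {n : ℕ} (f : (Fin n → ℝ) → (Fin n → ℝ))
    (xstar : ℝ → (Fin n → ℝ))
    (hxstar : ∀ s : ℝ, HasDerivAt xstar (f (xstar s)) s)
    (Pi dPi : ℝ → Matrix (Fin (n - 1)) (Fin n) ℝ)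
    (hPi : ∀ (s : ℝ) (i : Fin (n - 1)) (j : Fin n),
      HasDerivAt (fun u => Pi u i j) (dPi s i j) s)
    (x : ℝ → (Fin n → ℝ)) (hx : ∀ t : ℝ, HasDerivAt x (f (x t)) t)
    (τ : ℝ → ℝ) (dτ : ℝ → ℝ) (hτ : ∀ t : ℝ, HasDerivAt τ (dτ t) t)
    (xperp : ℝ → (Fin (n - 1) → ℝ))
    (hxperp : ∀ t : ℝ, xperp t = (Pi (τ t)).mulVec (x t - xstar (τ t)))
    (hrecon : ∀ t : ℝ, x t - xstar (τ t) = (Pi (τ t))ᵀ.mulVec (xperp t)) :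
    ∀ t : ℝ, HasDerivAt xperp
      (dτ t • (dPi (τ t) * (Pi (τ t))ᵀ).mulVec (xperp t)
        + (Pi (τ t)).mulVec (f (xstar (τ t) + (Pi (τ t))ᵀ.mulVec (xperp t)))
        - dτ t • (Pi (τ t)).mulVec (f (xstar (τ t)))) t := by
  intro t
  have hPiτ : ∀ i j, HasDerivAt (fun s => Pi (τ s) i j) ((dτ t • dPi (τ t)) i j) t := fun i j => by
    rw [Matrix.smul_apply, smul_eq_mul, mul_comm]
    exact (hPi (τ t) i j).comp t (hτ t)
  have hdev : HasDerivAt (fun s => x s - xstar (τ s)) (f (x t) - dτ t • f (xstar (τ t))) t :=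
    (hx t).sub ((hxstar (τ t)).scomp t (hτ t))
  have hx_eq : x t = xstar (τ t) + (Pi (τ t))ᵀ.mulVec (xperp t) := eq_add_of_sub_eq' (hrecon t)
  have hderiv := HasDerivAt.matrix_mulVec hPiτ hdev
  rw [← funext hxperp] at hderiv
  convert hderiv using 1
  rw [hrecon t, ← hx_eq, smul_mulVec, ← mulVec_mulVec, mulVec_sub, mulVec_smul]
  abel
end
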